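/- arXiv:2504.06062 — 3 statements merged into one kernel-verified Lean document; each statement's English description precedes it below -/
import Mathlib

section
/- For a 1-parameter unfolding (m = 1), substantiality and weak substantiality coincide: F admits a liftable vector field η with dΛ(η) = Λ·u + q (u a unit, q ∈ 𝔪_Λ𝔪_{p+1}) if and only if F admits a projectable liftable vector field η whose component η_{p+1} satisfies η_{p+1}(0) = 0 and ∂η_{p+1}/∂Λ(0) ≠ 0; equivalently, Λ ∈ dΛ(Lift(F)) after multiplication by a unit. -/
/-!
An analytic `f (x, t)` vanishing on `t = 0` is `t • g` with `g` analytic. Near a point with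
`t = 0`, put `ȳ = (y.1, 0)`; telescoping gives
`P (n+1) (y, …, y) - P (n+1) (ȳ, …, ȳ) = ∑ i, P (n+1) (y, …, y, y - ȳ, ȳ, …, ȳ)` with
`y - ȳ = y.2 • (0, 1)`, so the quotient by `t` has an explicit power series whose `n`-th term has
norm at most `(n + 1) * ‖P (n+1)‖`, hence no smaller radius. Globally `g` is the slope of `f` in
`t`, which these local series show to be analytic.

For the unfolding, both notions then say that `∂η_{p+1}/∂Λ (0) = g 0 ≠ 0` where
`η_{p+1} = Λ • g`: a substantial `η` has `g = u + h`, and conversely one takes `u := g 0` and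
`q := Λ • (g - g 0)`.
-/

/-- `η` is a (holomorphic) liftable vector field of the 1-parameter unfolding `F`. -/
def IsLiftable1 {n p : ℕ}
    (F : (Fin n → ℂ) × ℂ → (Fin p → ℂ) × ℂ)
    (η : (Fin p → ℂ) × ℂ → (Fin p → ℂ) × ℂ) : Prop :=
  ContDiff ℂ ⊤ η ∧ ∃ ξ : (Fin n → ℂ) × ℂ → (Fin n → ℂ) × ℂ,
    ∀ v, fderiv ℂ F v (ξ v) = η (F v)

/-- `F` is substantial: some liftable `η` has `dΛ(η) = Λ·u + q` with `u` a unit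
and `q ∈ 𝔪_Λ·𝔪_{p+1}`. -/
def IsSubstantial1 {n p : ℕ} (F : (Fin n → ℂ) × ℂ → (Fin p → ℂ) × ℂ) : Prop :=
  ∃ η, IsLiftable1 F η ∧
    ∃ u q : (Fin p → ℂ) × ℂ → ℂ, ContDiff ℂ ⊤ u ∧ u 0 ≠ 0 ∧
      (∃ h : (Fin p → ℂ) × ℂ → ℂ, ContDiff ℂ ⊤ h ∧ h 0 = 0 ∧ ∀ v, q v = v.2 * h v) ∧
      ∀ v, (η v).2 = v.2 * u v + q v

/-- `F` is weakly substantial: some liftable projectable `η` has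
`η_{p+1}(X,0) = 0` and `∂η_{p+1}/∂Λ(0) ≠ 0`. -/
def IsWeaklySubstantial1 {n p : ℕ} (F : (Fin n → ℂ) × ℂ → (Fin p → ℂ) × ℂ) : Prop :=
  ∃ η, IsLiftable1 F η ∧ (∀ X : Fin p → ℂ, (η (X, 0)).2 = 0) ∧
    deriv (fun t : ℂ => (η (0, t)).2) 0 ≠ 0

open Filter Topology Set
open scoped ENNReal

namespace FormalMultilinearSeries

variable {𝕜 E F G : Type*} [NontriviallyNormedField 𝕜] [NormedAddCommGroup E] [NormedSpace 𝕜 E]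
  [NormedAddCommGroup F] [NormedSpace 𝕜 F] [NormedAddCommGroup G] [NormedSpace 𝕜 G]

lemma radius_le_radius_of_norm_le_succ_mul {p : FormalMultilinearSeries 𝕜 E F}
    {q : FormalMultilinearSeries 𝕜 E G} (h : ∀ n, ‖q n‖ ≤ (n + 1) * ‖p (n + 1)‖) :
    p.radius ≤ q.radius := by
  refine ENNReal.le_of_forall_nnreal_lt fun r hr => ?_
  obtain ⟨r', hrr', hr'⟩ := ENNReal.lt_iff_exists_nnreal_btwn.1 hr
  have hrr : (r : ℝ) < r' := by exact_mod_cast ENNReal.coe_lt_coe.1 hrr'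
  have hr'0 : (0 : ℝ) < r' := r.2.trans_lt hrr
  obtain ⟨C, -, hC⟩ := p.norm_mul_pow_le_of_lt_radius hr'
  have ha : (r : ℝ) / r' < 1 := (div_lt_one hr'0).2 hrr
  have hlim : Tendsto (fun n : ℕ => ((n : ℝ) + 1) * ((r : ℝ) / r') ^ n * (C / r')) atTop (𝓝 0) := by
    have := ((tendsto_self_mul_const_pow_of_lt_one (by positivity) ha).add
      (tendsto_pow_atTop_nhds_zero_of_lt_one (by positivity) ha)).mul_const (C / r')
    simpa [add_mul] using this
  refine q.le_radius_of_isBigO (Asymptotics.IsBigO.trans ?_ (hlim.isBigO_one ℝ))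
  refine Asymptotics.IsBigO.of_bound 1 (Eventually.of_forall fun n => ?_)
  rw [Real.norm_of_nonneg (by positivity), one_mul]
  calc ‖q n‖ * r ^ n ≤ (n + 1) * ‖p (n + 1)‖ * r ^ n := by gcongr; exact h n
    _ = (n + 1) * (r / r') ^ n * (‖p (n + 1)‖ * r' ^ (n + 1) / r') := by
        rw [div_pow]; field_simp; ring
    _ ≤ (n + 1) * (r / r') ^ n * (C / r') := by gcongr; exact hC (n + 1)
    _ ≤ ‖(n + 1) * (r / r') ^ n * (C / r')‖ := Real.le_norm_self _

noncomputable def divSndTerm (P : FormalMultilinearSeries 𝕜 (E × 𝕜) F) (n : ℕ) (i : Fin (n + 1)) :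
    ContinuousMultilinearMap 𝕜 (fun _ : Fin n => E × 𝕜) F :=
  ((P (n + 1)).curryMid i (0, 1)).compContinuousLinearMap fun j =>
    if i.succAbove j < i then .id 𝕜 (E × 𝕜) else .inl 𝕜 E 𝕜 ∘L .fst 𝕜 E 𝕜

noncomputable def divSnd (P : FormalMultilinearSeries 𝕜 (E × 𝕜) F) :
    FormalMultilinearSeries 𝕜 (E × 𝕜) F :=
  fun n => ∑ i, P.divSndTerm n i

variable (P : FormalMultilinearSeries 𝕜 (E × 𝕜) F)

lemma norm_divSndTerm_le (n : ℕ) (i : Fin (n + 1)) : ‖P.divSndTerm n i‖ ≤ ‖P (n + 1)‖ := by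
  have hproj : ‖ContinuousLinearMap.inl 𝕜 E 𝕜 ∘L ContinuousLinearMap.fst 𝕜 E 𝕜‖ ≤ 1 :=
    ContinuousLinearMap.opNorm_le_bound _ zero_le_one fun v => by simp [Prod.norm_def]
  have hcurry : ‖(P (n + 1)).curryMid i (0, 1)‖ ≤ ‖P (n + 1)‖ :=
    ContinuousMultilinearMap.opNorm_le_bound (norm_nonneg _) fun m => by
      simpa using (P (n + 1)).norm_map_insertNth_le (i := i) ((0 : E), (1 : 𝕜)) m
  calc ‖P.divSndTerm n i‖ ≤ ‖(P (n + 1)).curryMid i (0, 1)‖ * 1 :=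
        (ContinuousMultilinearMap.norm_compContinuousLinearMap_le _ _).trans <|
          mul_le_mul_of_nonneg_left (Finset.prod_le_one (fun _ _ => norm_nonneg _)
            fun j _ => by split_ifs; exacts [ContinuousLinearMap.norm_id_le, hproj])
            (norm_nonneg _)
    _ ≤ ‖P (n + 1)‖ := by rwa [mul_one]

lemma norm_divSnd_le (n : ℕ) : ‖P.divSnd n‖ ≤ (n + 1) * ‖P (n + 1)‖ := by
  calc ‖P.divSnd n‖ ≤ ∑ i : Fin (n + 1), ‖P.divSndTerm n i‖ := norm_sum_le _ _
    _ ≤ ∑ _i : Fin (n + 1), ‖P (n + 1)‖ := Finset.sum_le_sum fun i _ => P.norm_divSndTerm_le n i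
    _ = (n + 1) * ‖P (n + 1)‖ := by simp

lemma snd_smul_divSndTerm_apply (n : ℕ) (i : Fin (n + 1)) (y : E × 𝕜) :
    y.2 • P.divSndTerm n i (fun _ => y) =
      P (n + 1) fun j => if j < i then y else if i = j then y - (y.1, 0) else (y.1, 0) := by
  have hy : y - (y.1, 0) = y.2 • ((0 : E), (1 : 𝕜)) := by ext <;> simp
  rw [divSndTerm, ContinuousMultilinearMap.compContinuousLinearMap_apply,
    ContinuousMultilinearMap.curryMid_apply, ← ContinuousMultilinearMap.coe_coe,
    ← MultilinearMap.map_insertNth_smul, ← hy]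
  congr 1
  refine Fin.insertNth_eq_iff.2 ⟨by simp, funext fun j => ?_⟩
  simp only [Fin.removeNth, (i.succAbove_ne j).symm, if_false]
  split_ifs <;> rfl

lemma snd_smul_divSnd_apply (n : ℕ) (y : E × 𝕜) :
    y.2 • P.divSnd n (fun _ => y) = P (n + 1) (fun _ => y) - P (n + 1) (fun _ => (y.1, 0)) := by
  have := (P (n + 1)).toMultilinearMap.map_sub_map_piecewise (fun _ => y) (fun _ => (y.1, 0))
    Finset.univ
  simp only [Finset.piecewise_univ, Finset.mem_univ, true_imp_iff,
    ContinuousMultilinearMap.coe_coe] at this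
  rw [this, divSnd, sum_apply, Finset.smul_sum]
  exact Finset.sum_congr rfl fun i _ => P.snd_smul_divSndTerm_apply n i y

lemma radius_le_radius_divSnd : P.radius ≤ P.divSnd.radius :=
  radius_le_radius_of_norm_le_succ_mul P.norm_divSnd_le

end FormalMultilinearSeries

section DivisionBySnd

variable {𝕜 E F : Type*} [NontriviallyNormedField 𝕜] [NormedAddCommGroup E] [NormedSpace 𝕜 E]
  [NormedAddCommGroup F] [NormedSpace 𝕜 F]

theorem DifferentiableAt.hasDerivAt_sub_smul {ψ : 𝕜 → F} {a : 𝕜} (hψ : DifferentiableAt 𝕜 ψ a) :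
    HasDerivAt (fun t => (t - a) • ψ t) (ψ a) a := by
  simpa using ((hasDerivAt_id a).sub_const a).fun_smul hψ.hasDerivAt

theorem dslope_eq_of_eventuallyEq_sub_smul {φ ψ : 𝕜 → F} {a b : 𝕜} (ha : φ a = 0)
    (hφ : φ =ᶠ[𝓝 b] fun t => (t - a) • ψ t) (hψ : DifferentiableAt 𝕜 ψ b) :
    dslope φ a b = ψ b := by
  rcases eq_or_ne b a with rfl | hb
  · rw [dslope_same, hφ.deriv_eq, hψ.hasDerivAt_sub_smul.deriv]
  · rw [dslope_of_ne _ hb, slope_def_module, ha, sub_zero, hφ.eq_of_nhds,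
      inv_smul_smul₀ (sub_ne_zero.2 hb)]

theorem hasDerivAt_prodMk_of_eq_snd_smul {f k : E × 𝕜 → F} (hfk : ∀ v, f v = v.2 • k v) {x : E}
    (hk : DifferentiableAt 𝕜 k (x, 0)) : HasDerivAt (fun t => f (x, t)) (k (x, 0)) 0 := by
  simpa [hfk] using
    (hk.comp (0 : 𝕜) ((differentiableAt_const x).prodMk differentiableAt_id)).hasDerivAt_sub_smul

variable [CompleteSpace F] {f : E × 𝕜 → F} {c : E × 𝕜}

theorem HasFPowerSeriesOnBall.eq_snd_smul_divSnd_sum {P : FormalMultilinearSeries 𝕜 (E × 𝕜) F}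
    {r : ℝ≥0∞} (hf : HasFPowerSeriesOnBall f P c r) (hc : c.2 = 0) (h0 : ∀ x, f (x, 0) = 0)
    {y : E × 𝕜} (hy : y ∈ Metric.eball 0 r) : f (c + y) = y.2 • P.divSnd.sum y := by
  have hy' : ((y.1, 0) : E × 𝕜) ∈ Metric.eball 0 r := by
    rw [Metric.mem_eball, edist_zero_right] at hy ⊢
    refine lt_of_le_of_lt ?_ hy
    rw [enorm_eq_nnnorm, enorm_eq_nnnorm, ENNReal.coe_le_coe]
    simp [Prod.nnnorm_def]
  have hproj : f (c + (y.1, 0)) = 0 := by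
    rw [show c + (y.1, 0) = (c.1 + y.1, 0) from Prod.ext rfl (by simp [hc])]
    exact h0 _
  have hdiff := (hf.hasSum hy).sub (hf.hasSum hy')
  rw [hproj, sub_zero, ← hasSum_nat_add_iff' 1] at hdiff
  simp only [Finset.sum_range_one, Subsingleton.elim (fun _ : Fin 0 => y) (fun _ => (y.1, 0)),
    sub_self, sub_zero] at hdiff
  have hyQ : y ∈ Metric.eball 0 P.divSnd.radius :=
    Metric.eball_subset_eball (hf.r_le.trans P.radius_le_radius_divSnd) hy
  refine hdiff.unique ?_
  simpa only [P.snd_smul_divSnd_apply] using (P.divSnd.hasSum hyQ).const_smul y.2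

theorem AnalyticAt.exists_eventuallyEq_snd_smul (hf : AnalyticAt 𝕜 f c) (hc : c.2 = 0)
    (h0 : ∀ x, f (x, 0) = 0) :
    ∃ g : E × 𝕜 → F, AnalyticAt 𝕜 g c ∧ ∀ᶠ v in 𝓝 c, f v = v.2 • g v := by
  obtain ⟨P, r, hP⟩ := hf
  have hQ : HasFPowerSeriesOnBall (fun v => P.divSnd.sum (v - c)) P.divSnd c P.divSnd.radius := by
    simpa using (P.divSnd.hasFPowerSeriesOnBall
      (hP.r_pos.trans_le (hP.r_le.trans P.radius_le_radius_divSnd))).comp_sub c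
  refine ⟨_, hQ.analyticAt, ?_⟩
  filter_upwards [Metric.eball_mem_nhds c hP.r_pos] with v hv
  have hvc : v - c ∈ Metric.eball 0 r := by
    rwa [Metric.mem_eball, edist_zero_right, ← edist_eq_enorm_sub]
  simpa [hc] using hP.eq_snd_smul_divSnd_sum hc h0 hvc

theorem AnalyticOnNhd.exists_eq_snd_smul [CompleteSpace 𝕜] (hf : AnalyticOnNhd 𝕜 f univ)
    (h0 : ∀ x, f (x, 0) = 0) :
    ∃ g : E × 𝕜 → F, AnalyticOnNhd 𝕜 g univ ∧ ∀ v, f v = v.2 • g v := by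
  refine ⟨fun v => dslope (fun t => f (v.1, t)) 0 v.2, fun c _ => ?_, fun v => ?_⟩
  · by_cases hc : c.2 = 0
    · obtain ⟨g, hg, hfg⟩ := (hf c trivial).exists_eventuallyEq_snd_smul hc h0
      refine hg.congr ?_
      filter_upwards [hfg.eventually_nhds, hg.eventually_analyticAt] with v hv hgv
      have hline : Tendsto (fun t => (v.1, t)) (𝓝 v.2) (𝓝 v) :=
        (Continuous.prodMk_right v.1).tendsto' _ _ rfl
      refine (dslope_eq_of_eventuallyEq_sub_smul (φ := fun t => f (v.1, t))
        (ψ := fun t => g (v.1, t)) (h0 v.1) ?_ ?_).symm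
      · simpa [EventuallyEq] using hline.eventually hv
      · exact hgv.differentiableAt.comp v.2 ((differentiableAt_const _).prodMk differentiableAt_id)
    · refine ((analyticAt_snd.inv hc).smul (hf c trivial)).congr ?_
      filter_upwards [isOpen_ne_fun continuous_snd continuous_const |>.mem_nhds hc] with v hv
      simp [dslope_of_ne _ hv, slope_def_module, h0]
  · simpa using (sub_smul_dslope_of_zero (f := fun t => f (v.1, t)) (h0 v.1) v.2).symm

end DivisionBySnd

theorem stmt_11_general {n p : ℕ} (F : (Fin n → ℂ) × ℂ → (Fin p → ℂ) × ℂ) :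
    IsSubstantial1 F ↔ IsWeaklySubstantial1 F := by
  constructor
  · rintro ⟨η, hη, u, q, hu, hu0, ⟨h, hh, hh0, hq⟩, hηq⟩
    have hηuh : ∀ v, (η v).2 = v.2 • (u v + h v) := fun v => by rw [hηq, hq, smul_eq_mul, mul_add]
    have hderiv := hasDerivAt_prodMk_of_eq_snd_smul hηuh (x := 0)
      ((hu.add hh).differentiable (by simp) _)
    refine ⟨η, hη, fun X => by simp [hηuh], ?_⟩
    rwa [hderiv.deriv, Prod.mk_zero_zero, hh0, add_zero]
  · rintro ⟨η, hη, hη0, hd⟩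
    obtain ⟨g, hg, hηg⟩ := AnalyticOnNhd.exists_eq_snd_smul (f := fun v => (η v).2)
      (contDiff_snd.comp hη.1).analyticOnNhd hη0
    have hderiv := hasDerivAt_prodMk_of_eq_snd_smul hηg (x := 0) (hg 0 trivial).differentiableAt
    rw [hderiv.deriv, Prod.mk_zero_zero] at hd
    refine ⟨η, hη, fun _ => g 0, fun v => v.2 * (g v - g 0), contDiff_const, hd,
      ⟨fun v => g v - g 0, hg.contDiff.sub contDiff_const, sub_self _, fun v => rfl⟩, fun v => ?_⟩
    rw [hηg v, smul_eq_mul]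
    ring

/-- For 1-parameter stable unfoldings, substantiality and weak substantiality
coincide. -/
theorem stmt_11 {n p : ℕ} (F : (Fin n → ℂ) × ℂ → (Fin p → ℂ) × ℂ)
    (hF : Differentiable ℂ F) :
    IsSubstantial1 F ↔ IsWeaklySubstantial1 F :=
  stmt_11_general F
end

section
/- The Euler vector field construction yields substantiality: if F : (𝕂ⁿ×𝕂^m,0) → (𝕂^p×𝕂^m,0) is a weighted-homogeneous unfolding with weights on all source variables and degrees d₁,…,d_{p+m} on all target variables (all positive integers), then the Euler vector field η(X,Λ) = ∑ⱼ dⱼXⱼ∂/∂Xⱼ + ∑ₖ d_{p+k}Λₖ∂/∂Λₖ is liftable for F (being F-related to the source Euler vector field), and satisfies dΛ_k(η) = d_{p+k}Λ_k, so F is substantial. -/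
lemma euler_comp (N : ℕ) (c : ℂ) :
    HasDerivAt (fun t : ℂ => t ^ N * c) ((N : ℂ) * c) 1 := by
  have h := (hasDerivAt_pow N (1 : ℂ)).mul_const c
  simpa using h

/-- For a weighted-homogeneous unfolding `F`, the target Euler vector field
`η = ∑ dⱼXⱼ∂/∂Xⱼ + ∑ d_{p+k}Λₖ∂/∂Λₖ` is liftable (F-related to the source
Euler vector field), and `dΛ_k(η) = d_{p+k}Λ_k`, so `F` is substantial. -/
theorem stmt_12 {n p m : ℕ}
    (F : (Fin n → ℂ) × (Fin m → ℂ) → (Fin p → ℂ) × (Fin m → ℂ))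
    (hF : Differentiable ℂ F)
    (hunf : ∀ v, (F v).2 = v.2)
    (w : Fin n → ℕ+) (wl : Fin m → ℕ+) (d : Fin p → ℕ+)
    (hwh : ∀ (t : ℂ) (v : (Fin n → ℂ) × (Fin m → ℂ)),
      F (fun i => t ^ (w i : ℕ) * v.1 i, fun k => t ^ (wl k : ℕ) * v.2 k) =
        (fun j => t ^ (d j : ℕ) * (F v).1 j, fun k => t ^ (wl k : ℕ) * (F v).2 k))
    (η : (Fin p → ℂ) × (Fin m → ℂ) → (Fin p → ℂ) × (Fin m → ℂ))
    (hη : ∀ X, η X = (fun j => ((d j : ℕ) : ℂ) * X.1 j, fun k => ((wl k : ℕ) : ℂ) * X.2 k))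
    (ξ : (Fin n → ℂ) × (Fin m → ℂ) → (Fin n → ℂ) × (Fin m → ℂ))
    (hξ : ∀ v, ξ v = (fun i => ((w i : ℕ) : ℂ) * v.1 i, fun k => ((wl k : ℕ) : ℂ) * v.2 k)) :
    (∀ v, fderiv ℂ F v (ξ v) = η (F v)) ∧
      ∀ (k : Fin m) (X : (Fin p → ℂ) × (Fin m → ℂ)),
        (η X).2 k = ((wl k : ℕ) : ℂ) * X.2 k := by
  constructor
  · intro v
    set φ : ℂ → (Fin n → ℂ) × (Fin m → ℂ) :=
      fun t => (fun i => t ^ (w i : ℕ) * v.1 i, fun k => t ^ (wl k : ℕ) * v.2 k) with hφ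
    have hφ1 : φ 1 = v := by
      simp [hφ]
    have hφd : HasDerivAt φ (ξ v) 1 := by
      rw [hξ]
      exact HasDerivAt.prodMk
        (hasDerivAt_pi.2 fun i => euler_comp _ _)
        (hasDerivAt_pi.2 fun k => euler_comp _ _)
    have hcomp : HasDerivAt (F ∘ φ) (fderiv ℂ F v (ξ v)) 1 := by
      have hfd : HasFDerivAt F (fderiv ℂ F v) (φ 1) := by
        rw [hφ1]; exact (hF v).hasFDerivAt
      exact hfd.comp_hasDerivAt 1 hφd
    have heq : F ∘ φ = fun t =>
        ((fun j => t ^ (d j : ℕ) * (F v).1 j, fun k => t ^ (wl k : ℕ) * (F v).2 k) :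
          (Fin p → ℂ) × (Fin m → ℂ)) := by
      funext t
      exact hwh t v
    rw [heq] at hcomp
    have hψd : HasDerivAt (fun t : ℂ =>
        ((fun j => t ^ (d j : ℕ) * (F v).1 j, fun k => t ^ (wl k : ℕ) * (F v).2 k) :
          (Fin p → ℂ) × (Fin m → ℂ))) (η (F v)) 1 := by
      rw [hη]
      exact HasDerivAt.prodMk
        (hasDerivAt_pi.2 fun j => euler_comp _ _)
        (hasDerivAt_pi.2 fun k => euler_comp _ _)
    exact hcomp.unique hψd
  · intro k X
    rw [hη]
end

section
/- For F(x,y,z,w,λ) = (x,y,z, w³ + (λ + xy³z³ + y⁵ + z⁵)w, λ), the vector field η(X,Y,Z,W,Λ) = −2X∂/∂X + 2Y∂/∂Y + 2Z∂/∂Z + 15W∂/∂W + 10Λ∂/∂Λ is liftable for F: it is F-related to the source vector field ξ(x,y,z,w,λ) = −2x∂/∂x + 2y∂/∂y + 2z∂/∂z + 5w∂/∂w + 10λ∂/∂λ, i.e. η∘F = DF·ξ. -/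
/-!
Under the scaling `(x, y, z, w, λ) ↦ (q⁻²x, q²y, q²z, q⁵w, q¹⁰λ)` the map `F` is
weighted homogeneous: `F` intertwines it with `(X, Y, Z, W, Λ) ↦ (q⁻²X, q²Y, q²Z, q¹⁵W, q¹⁰Λ)`,
because `xy³z³ + y⁵ + z⁵` and `λ` have weight `10` and `w` has weight `5`.
Differentiating this identity along `q = exp t` at `t = 0` turns the two scalings into their
Euler vector fields `ξ` and `η`, and the chain rule gives `DF · ξ = η ∘ F`.
-/

open Complex

abbrev C5 := ℂ × ℂ × ℂ × ℂ × ℂ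

section ChainRule

variable {𝕜 E G : Type*} [NontriviallyNormedField 𝕜] [NormedAddCommGroup E] [NormedSpace 𝕜 E]
  [NormedAddCommGroup G] [NormedSpace 𝕜 G]

theorem fderiv_apply_eq_of_comp_eq {f : E → G} {γ : 𝕜 → E} {δ : 𝕜 → G} {γ' : E} {δ' : G}
    {t : 𝕜} (hf : DifferentiableAt 𝕜 f (γ t)) (hγ : HasDerivAt γ γ' t) (hδ : HasDerivAt δ δ' t)
    (h : f ∘ γ = δ) : fderiv 𝕜 f (γ t) γ' = δ' :=
  (hf.hasFDerivAt.comp_hasDerivAt t hγ).unique (h ▸ hδ)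

end ChainRule

noncomputable section

def weightedScale (k : ℤ × ℤ × ℤ × ℤ × ℤ) (q : ℂ) (v : C5) : C5 :=
  (q ^ k.1 * v.1, q ^ k.2.1 * v.2.1, q ^ k.2.2.1 * v.2.2.1, q ^ k.2.2.2.1 * v.2.2.2.1,
    q ^ k.2.2.2.2 * v.2.2.2.2)

/-- The Euler vector field of `weightedScale k`. -/
def eulerField (k : ℤ × ℤ × ℤ × ℤ × ℤ) (v : C5) : C5 :=
  (k.1 * v.1, k.2.1 * v.2.1, k.2.2.1 * v.2.2.1, k.2.2.2.1 * v.2.2.2.1, k.2.2.2.2 * v.2.2.2.2)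

end

theorem hasDerivAt_exp_zpow_mul (k : ℤ) (a : ℂ) :
    HasDerivAt (fun t : ℂ => exp t ^ k * a) (k * a) 0 := by
  have h := (((hasDerivAt_id (0 : ℂ)).const_mul (k : ℂ)).cexp).mul_const a
  simp only [id, mul_zero, exp_zero, mul_one, one_mul] at h
  simpa only [exp_int_mul] using h

theorem hasDerivAt_weightedScale_exp (k : ℤ × ℤ × ℤ × ℤ × ℤ) (v : C5) :
    HasDerivAt (fun t => weightedScale k (exp t) v) (eulerField k v) 0 :=
  (hasDerivAt_exp_zpow_mul _ _).prodMk <| (hasDerivAt_exp_zpow_mul _ _).prodMk <|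
    (hasDerivAt_exp_zpow_mul _ _).prodMk <|
      (hasDerivAt_exp_zpow_mul _ _).prodMk (hasDerivAt_exp_zpow_mul _ _)

theorem fderiv_eulerField_of_weightedHomogeneous {f : C5 → C5} {k m : ℤ × ℤ × ℤ × ℤ × ℤ}
    {v : C5} (hf : DifferentiableAt ℂ f v)
    (hom : ∀ q ≠ 0, f (weightedScale k q v) = weightedScale m q (f v)) :
    fderiv ℂ f v (eulerField k v) = eulerField m (f v) := by
  have hv : weightedScale k (exp 0) v = v := by simp [weightedScale]
  have key := fderiv_apply_eq_of_comp_eq (by rwa [hv]) (hasDerivAt_weightedScale_exp k v)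
    (hasDerivAt_weightedScale_exp m (f v)) (funext fun t => hom _ (exp_ne_zero t))
  rwa [hv] at key

/-- For `F(x,y,z,w,λ) = (x,y,z, w³+(λ+xy³z³+y⁵+z⁵)w, λ)`, the vector field
`η = −2X∂_X + 2Y∂_Y + 2Z∂_Z + 15W∂_W + 10Λ∂_Λ` is liftable: it is `F`-related
to `ξ = −2x∂_x + 2y∂_y + 2z∂_z + 5w∂_w + 10λ∂_λ`. -/
theorem stmt_19
    (F : ℂ × ℂ × ℂ × ℂ × ℂ → ℂ × ℂ × ℂ × ℂ × ℂ)
    (hF : ∀ v : ℂ × ℂ × ℂ × ℂ × ℂ,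
      F v = (v.1, v.2.1, v.2.2.1,
        v.2.2.2.1 ^ 3 +
          (v.2.2.2.2 + v.1 * v.2.1 ^ 3 * v.2.2.1 ^ 3 + v.2.1 ^ 5 + v.2.2.1 ^ 5) *
            v.2.2.2.1,
        v.2.2.2.2))
    (η ξ : ℂ × ℂ × ℂ × ℂ × ℂ → ℂ × ℂ × ℂ × ℂ × ℂ)
    (hη : ∀ X : ℂ × ℂ × ℂ × ℂ × ℂ,
      η X = (-2 * X.1, 2 * X.2.1, 2 * X.2.2.1, 15 * X.2.2.2.1, 10 * X.2.2.2.2))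
    (hξ : ∀ v : ℂ × ℂ × ℂ × ℂ × ℂ,
      ξ v = (-2 * v.1, 2 * v.2.1, 2 * v.2.2.1, 5 * v.2.2.2.1, 10 * v.2.2.2.2)) :
    ∀ v, fderiv ℂ F v (ξ v) = η (F v) := by
  obtain rfl : F = _ := funext hF
  intro v
  have hξk : ξ v = eulerField (-2, 2, 2, 5, 10) v := by simp [hξ, eulerField]
  have hηm : η = eulerField (-2, 2, 2, 15, 10) := funext fun X => by simp [hη, eulerField]
  rw [hξk, hηm]
  refine fderiv_eulerField_of_weightedHomogeneous (by fun_prop) fun q hq => ?_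
  simp only [weightedScale, Prod.mk.injEq, true_and, and_true, zpow_neg, zpow_ofNat]
  field_simp
end
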